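/- (Theorem 4.3, algebraic form) Suppose A is a real s×s matrix such that det(I_{sm} − h·M^{(1)}(A;F^{(1)})) = det(exp(h·K_{11}))·det(I_{sm} + h·M^{(1)}(Aᵀ;F^{(1)})), and suppose there exists an invertible real n×n matrix P with P·K_{22}·P^{−1} = −K_{22}ᵀ and P·F_i^{(2)}·P^{−1} = −(F_i^{(2)})ᵀ for all i = 1,…,s. Then det(I_{s(m+n)} − h·M(A;F)) = det(exp(h·K))·det(I_{s(m+n)} + h·M(Aᵀ;F)). -/

import Mathlib

/-!
With `E_i = exp(c_i h K)`, the matrix `M(A;F)` is conjugate, by `diag(E_1, …, E_s)`, to the block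
matrix with blocks `a_{ij} H_j`, where `H_j = E_j⁻¹ F_j E_j`; so `det(I + t M(A;F))` only sees the
`H_j`. Since `K` and the `F_i` are block lower triangular, `det(I + t M(A;F))` factors into the
corresponding determinants for the two diagonal blocks, and `det(exp(hK))` into
`det(exp(hK₁₁)) det(exp(hK₂₂))`. For the second block, conjugating by `diag(P, …, P)` turns every
`H_j` into `-H_jᵀ`; transposing, then using `det(I + XY) = det(I + YX)` to move `diag(H_j)` past
`Aᵀ ⊗ I`, gives `det(I - t M(A;F⁽²⁾)) = det(I + t M(Aᵀ;F⁽²⁾))`.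
Finally `exp(-hK₂₂)ᵀ` is conjugate to `exp(hK₂₂)`, so `det(exp(hK₂₂))² = 1`, and
`det(exp X) = det(exp(X/2))² ≥ 0` gives `det(exp(hK₂₂)) = 1`.
-/

open Matrix NormedSpace

/-- The block matrix `M(A;F)` whose `(i,j)` block is `a_{ij}·exp((c_i−c_j)·h·K)·F_j`. -/
noncomputable def Mblk {ι : Type*} [Fintype ι] [DecidableEq ι] {s : ℕ} (h : ℝ)
    (K : Matrix ι ι ℝ) (c : Fin s → ℝ) (A : Matrix (Fin s) (Fin s) ℝ)
    (F : Fin s → Matrix ι ι ℝ) : Matrix (Fin s × ι) (Fin s × ι) ℝ :=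
  fun p q => A p.1 q.1 * (NormedSpace.exp (((c p.1 - c q.1) * h) • K) * F q.1) p.2 q.2

namespace Matrix

variable {σ ι m n R : Type*} [Fintype σ] [DecidableEq σ] [Fintype ι] [Fintype m] [DecidableEq m]
  [Fintype n] [DecidableEq n]

theorem det_one_add_smul_conj [CommRing R] {U V : Matrix m m R} (hUV : U * V = 1)
    (X : Matrix m m R) (t : R) : (1 + t • (U * X * V)).det = (1 + t • X).det := by
  have h : 1 + t • (U * X * V) = U * (1 + t • X) * V := by
    rw [mul_add, add_mul, mul_one, hUV, mul_smul_comm, smul_mul_assoc]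
  rw [h, det_conj_of_mul_eq_one hUV (mul_eq_one_comm.mp hUV)]

theorem det_eq_det_submatrix_inl_mul_det_submatrix_inr [CommRing R]
    {X : Matrix (σ × (m ⊕ n)) (σ × (m ⊕ n)) R} (hX : ∀ i j p q, X (i, .inl p) (j, .inr q) = 0) :
    X.det = (X.submatrix (Prod.map id Sum.inl) (Prod.map id Sum.inl)).det *
      (X.submatrix (Prod.map id Sum.inr) (Prod.map id Sum.inr)).det := by
  set e := (Equiv.prodSumDistrib σ m n).symm
  have h12 : (X.submatrix e e).toBlocks₁₂ = 0 := by
    ext ⟨i, p⟩ ⟨j, q⟩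
    exact hX i j p q
  rw [← det_submatrix_equiv_self e, ← fromBlocks_toBlocks (X.submatrix e e), h12,
    det_fromBlocks_zero₁₂]
  rfl

omit [DecidableEq σ] in
theorem comp_mul [NonUnitalNonAssocSemiring R] (X Y : Matrix σ σ (Matrix ι ι R)) :
    comp σ σ ι ι R (X * Y) = comp σ σ ι ι R X * comp σ σ ι ι R Y :=
  map_mul (compRingEquiv σ ι R) X Y

theorem comp_diagonal_mul_comp_mul_comp_diagonal [Semiring R] (U V : σ → Matrix ι ι R)
    (X : Matrix σ σ (Matrix ι ι R)) :
    comp σ σ ι ι R (diagonal U) * comp σ σ ι ι R X * comp σ σ ι ι R (diagonal V) =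
      comp σ σ ι ι R (of fun i j => U i * X i j * V j) := by
  rw [← comp_mul, ← comp_mul]
  congr 1
  ext1 i j
  simp [diagonal_mul, mul_diagonal]

theorem comp_diagonal_mul_comp_diagonal_eq_one [Semiring R] [DecidableEq ι]
    {U V : σ → Matrix ι ι R} (hUV : ∀ i, U i * V i = 1) :
    comp σ σ ι ι R (diagonal U) * comp σ σ ι ι R (diagonal V) = 1 := by
  rw [← comp_mul, diagonal_mul_diagonal]
  simp [hUV, ← diagonal_one]

def scaledBlocks [CommRing R] (A : Matrix σ σ R) (H : σ → Matrix ι ι R) :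
    Matrix (σ × ι) (σ × ι) R :=
  comp σ σ ι ι R (of fun i j => A i j • H j)

theorem scaledBlocks_eq_mul [CommRing R] [DecidableEq ι] (A : Matrix σ σ R)
    (H : σ → Matrix ι ι R) :
    scaledBlocks A H =
      comp σ σ ι ι R (A.map (algebraMap R _)) * comp σ σ ι ι R (diagonal H) := by
  rw [scaledBlocks, ← comp_mul]
  congr 1
  ext1 i j
  simp [mul_diagonal, Algebra.algebraMap_eq_smul_one]

theorem transpose_scaledBlocks [CommRing R] [DecidableEq ι] (A : Matrix σ σ R)
    (H : σ → Matrix ι ι R) :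
    (scaledBlocks A H)ᵀ =
      comp σ σ ι ι R (diagonal fun j => (H j)ᵀ) * comp σ σ ι ι R (Aᵀ.map (algebraMap R _)) := by
  rw [scaledBlocks, transpose_comp, ← comp_mul]
  congr 1
  ext1 i j
  simp [diagonal_mul, Algebra.algebraMap_eq_smul_one]

theorem det_one_sub_smul_scaledBlocks [CommRing R] [DecidableEq ι] (A : Matrix σ σ R)
    {H : σ → Matrix ι ι R} {P : Matrix ι ι R} (hP : IsUnit P)
    (hH : ∀ j, P * H j * P⁻¹ = -(H j)ᵀ) (t : R) :
    (1 - t • scaledBlocks A H).det = (1 + t • scaledBlocks Aᵀ H).det := by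
  have hPP : P * P⁻¹ = 1 := mul_nonsing_inv P ((isUnit_iff_isUnit_det P).mp hP)
  have hconj : comp σ σ ι ι R (diagonal fun _ => P) * scaledBlocks A H *
      comp σ σ ι ι R (diagonal fun _ => P⁻¹) = -scaledBlocks A fun j => (H j)ᵀ := by
    rw [scaledBlocks, comp_diagonal_mul_comp_mul_comp_diagonal]
    ext
    simp [scaledBlocks, hH]
  calc (1 - t • scaledBlocks A H).det
      = (1 + (-t) • (comp σ σ ι ι R (diagonal fun _ => P) * scaledBlocks A H *
          comp σ σ ι ι R (diagonal fun _ => P⁻¹))).det := by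
        rw [det_one_add_smul_conj (comp_diagonal_mul_comp_diagonal_eq_one fun _ => hPP),
          neg_smul, sub_eq_add_neg]
    _ = (1 + t • scaledBlocks A fun j => (H j)ᵀ).det := by rw [hconj, neg_smul_neg]
    _ = (1 + t • (scaledBlocks A fun j => (H j)ᵀ)ᵀ).det := by
        rw [← det_transpose, transpose_add, transpose_one, transpose_smul]
    _ = (1 + t • scaledBlocks Aᵀ H).det := by
        rw [transpose_scaledBlocks, scaledBlocks_eq_mul, ← smul_mul_assoc, det_one_add_mul_comm,
          mul_smul_comm]
        simp only [transpose_transpose]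

def fromBlocksDiagRingHom (R : Type*) [Semiring R] :
    Matrix m m R × Matrix n n R →+* Matrix (m ⊕ n) (m ⊕ n) R where
  toFun X := fromBlocks X.1 0 0 X.2
  map_one' := fromBlocks_one
  map_mul' X Y := by simp [fromBlocks_multiply]
  map_zero' := fromBlocks_zero
  map_add' X Y := by simp [fromBlocks_add]

-- `map_exp` needs a normed algebra; `exp` itself depends only on the topology.
attribute [local instance] Matrix.linftyOpNormedRing Matrix.linftyOpNormedAlgebra in
theorem exp_fromBlocks_zero (X : Matrix m m ℝ) (Y : Matrix n n ℝ) :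
    exp (fromBlocks X 0 0 Y) = fromBlocks (exp X) 0 0 (exp Y) := by
  have hcont : Continuous (fromBlocksDiagRingHom (m := m) (n := n) ℝ) :=
    continuous_fst.matrix_fromBlocks continuous_const continuous_const continuous_snd
  have h := map_exp _ hcont (X, Y)
  simp only [fromBlocksDiagRingHom, RingHom.coe_mk, MonoidHom.coe_mk, OneHom.coe_mk,
    Prod.fst_exp, Prod.snd_exp] at h
  exact h.symm

variable [DecidableEq ι]

theorem exp_add_smul (X : Matrix ι ι ℝ) (a b : ℝ) :
    exp ((a + b) • X) = exp (a • X) * exp (b • X) := by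
  rw [add_smul]
  exact exp_add_of_commute _ _ (((Commute.refl X).smul_left a).smul_right b)

theorem exp_mul_exp_neg (X : Matrix ι ι ℝ) : exp X * exp (-X) = 1 := by
  rw [← exp_add_of_commute _ _ ((Commute.refl X).neg_right), add_neg_cancel, exp_zero]

theorem det_exp_nonneg (X : Matrix ι ι ℝ) : 0 ≤ (exp X).det := by
  have h := exp_add_smul X 2⁻¹ 2⁻¹
  rw [show (2⁻¹ : ℝ) + 2⁻¹ = 1 by norm_num, one_smul] at h
  rw [h, det_mul]
  exact mul_self_nonneg _

theorem conj_exp_of_conj_eq_neg_transpose {X P : Matrix ι ι ℝ} (hP : IsUnit P)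
    (hX : P * X * P⁻¹ = -Xᵀ) : P * exp X * P⁻¹ = (exp (-X))ᵀ := by
  rw [← exp_conj P X hP, hX, ← transpose_neg, exp_transpose]

theorem conj_smul_eq_neg_transpose [CommRing R] {X P : Matrix ι ι R} (hX : P * X * P⁻¹ = -Xᵀ)
    (a : R) : P * (a • X) * P⁻¹ = -(a • X)ᵀ := by
  rw [mul_smul_comm, smul_mul_assoc, hX, transpose_smul, smul_neg]

theorem conj_exp_neg_mul_mul_exp {X Y P : Matrix ι ι ℝ} (hP : IsUnit P) (hX : P * X * P⁻¹ = -Xᵀ)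
    (hY : P * Y * P⁻¹ = -Yᵀ) : P * (exp (-X) * Y * exp X) * P⁻¹ = -(exp (-X) * Y * exp X)ᵀ := by
  have hPP : P⁻¹ * P = 1 := nonsing_inv_mul P ((isUnit_iff_isUnit_det P).mp hP)
  have hXneg : P * (-X) * P⁻¹ = -(-X)ᵀ := by rw [mul_neg, neg_mul, hX, transpose_neg]
  calc P * (exp (-X) * Y * exp X) * P⁻¹
      = (P * exp (-X) * P⁻¹) * (P * Y * P⁻¹) * (P * exp X * P⁻¹) := by
        simp only [Matrix.mul_assoc, ← Matrix.mul_assoc P⁻¹ P, hPP, Matrix.one_mul]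
    _ = -(exp (-X) * Y * exp X)ᵀ := by
        rw [conj_exp_of_conj_eq_neg_transpose hP hXneg, neg_neg, hY,
          conj_exp_of_conj_eq_neg_transpose hP hX]
        simp [transpose_mul, Matrix.mul_assoc]

theorem det_exp_eq_one_of_conj_eq_neg_transpose {X P : Matrix ι ι ℝ} (hP : IsUnit P)
    (hX : P * X * P⁻¹ = -Xᵀ) : (exp X).det = 1 := by
  have hneg : (exp (-X)).det = (exp X).det := by
    rw [← det_transpose, ← conj_exp_of_conj_eq_neg_transpose hP hX, det_conj hP]
  have hsq : (exp X).det * (exp X).det = 1 := by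
    nth_rw 1 [← hneg]
    rw [exp_neg]
    exact det_nonsing_inv_mul_det _ ((isUnit_iff_isUnit_det _).mp (isUnit_exp X))
  nlinarith [det_exp_nonneg X]

end Matrix


section Mblk

variable {ι : Type*} [Fintype ι] [DecidableEq ι] {s : ℕ}

theorem Mblk_eq_conj_scaledBlocks (h : ℝ) (K : Matrix ι ι ℝ) (c : Fin s → ℝ)
    (A : Matrix (Fin s) (Fin s) ℝ) (F : Fin s → Matrix ι ι ℝ) :
    Mblk h K c A F =
      comp _ _ _ _ _ (diagonal fun i => exp ((c i * h) • K)) *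
        scaledBlocks A (fun j => exp (-((c j * h) • K)) * F j * exp ((c j * h) • K)) *
          comp _ _ _ _ _ (diagonal fun j => exp (-((c j * h) • K))) := by
  rw [scaledBlocks, comp_diagonal_mul_comp_mul_comp_diagonal]
  ext ⟨i, p⟩ ⟨j, q⟩
  have hblock : exp (((c i - c j) * h) • K) * F j = exp ((c i * h) • K) *
      (exp (-((c j * h) • K)) * F j * exp ((c j * h) • K)) * exp (-((c j * h) • K)) := by
    rw [show (c i - c j) * h = c i * h + -(c j * h) by ring, exp_add_smul, neg_smul]
    simp only [Matrix.mul_assoc, exp_mul_exp_neg, Matrix.mul_one]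
  simp [Mblk, hblock]

theorem det_one_add_smul_Mblk (h : ℝ) (K : Matrix ι ι ℝ) (c : Fin s → ℝ)
    (A : Matrix (Fin s) (Fin s) ℝ) (F : Fin s → Matrix ι ι ℝ) (t : ℝ) :
    (1 + t • Mblk h K c A F).det =
      (1 + t • scaledBlocks A (fun j => exp (-((c j * h) • K)) * F j * exp ((c j * h) • K))).det := by
  rw [Mblk_eq_conj_scaledBlocks,
    det_one_add_smul_conj (comp_diagonal_mul_comp_diagonal_eq_one fun _ => exp_mul_exp_neg _)]

theorem det_one_sub_smul_Mblk (h : ℝ) {K : Matrix ι ι ℝ} (c : Fin s → ℝ)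
    (A : Matrix (Fin s) (Fin s) ℝ) {F : Fin s → Matrix ι ι ℝ} {P : Matrix ι ι ℝ} (hP : IsUnit P)
    (hK : P * K * P⁻¹ = -Kᵀ) (hF : ∀ i, P * F i * P⁻¹ = -(F i)ᵀ) (t : ℝ) :
    (1 - t • Mblk h K c A F).det = (1 + t • Mblk h K c Aᵀ F).det := by
  rw [sub_eq_add_neg, ← neg_smul, det_one_add_smul_Mblk, neg_smul, ← sub_eq_add_neg,
    det_one_sub_smul_scaledBlocks A hP
      (fun j => conj_exp_neg_mul_mul_exp hP (conj_smul_eq_neg_transpose hK _) (hF j)),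
    det_one_add_smul_Mblk]

theorem det_one_add_smul_Mblk_fromBlocks {m n : Type*} [Fintype m] [DecidableEq m] [Fintype n]
    [DecidableEq n] (h t : ℝ) (c : Fin s → ℝ) (K11 : Matrix m m ℝ) (K22 : Matrix n n ℝ)
    (F1 : Fin s → Matrix m m ℝ) (F2 : Fin s → Matrix n n ℝ) (G : Fin s → Matrix n m ℝ)
    (A : Matrix (Fin s) (Fin s) ℝ) :
    (1 + t • Mblk h (fromBlocks K11 0 0 K22) c A fun i => fromBlocks (F1 i) 0 (G i) (F2 i)).det =
      (1 + t • Mblk h K11 c A F1).det * (1 + t • Mblk h K22 c A F2).det := by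
  have hblock : ∀ (x : ℝ) j, exp (x • fromBlocks K11 0 0 K22) * fromBlocks (F1 j) 0 (G j) (F2 j) =
      fromBlocks (exp (x • K11) * F1 j) 0 (exp (x • K22) * G j) (exp (x • K22) * F2 j) := by
    intro x j
    rw [fromBlocks_smul, smul_zero, smul_zero, exp_fromBlocks_zero, fromBlocks_multiply]
    simp
  rw [det_eq_det_submatrix_inl_mul_det_submatrix_inr]
  · congr 2 <;> ext ⟨i, p⟩ ⟨j, q⟩ <;> simp [Mblk, hblock, one_apply, Prod.ext_iff]
  · intro i j p q
    simp [Mblk, hblock, one_apply]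

end Mblk

/-- **Theorem 4.3, algebraic form.** -/
theorem stmt_12 (m n s : ℕ) (h : ℝ) (c : Fin s → ℝ)
    (K11 : Matrix (Fin m) (Fin m) ℝ) (K22 : Matrix (Fin n) (Fin n) ℝ)
    (F1 : Fin s → Matrix (Fin m) (Fin m) ℝ) (F2 : Fin s → Matrix (Fin n) (Fin n) ℝ)
    (G : Fin s → Matrix (Fin n) (Fin m) ℝ)
    (K : Matrix (Fin m ⊕ Fin n) (Fin m ⊕ Fin n) ℝ)
    (hK : K = fromBlocks K11 0 0 K22)
    (F : Fin s → Matrix (Fin m ⊕ Fin n) (Fin m ⊕ Fin n) ℝ)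
    (hF : ∀ i, F i = fromBlocks (F1 i) 0 (G i) (F2 i))
    (A : Matrix (Fin s) (Fin s) ℝ)
    (hVP1 : ((1 : Matrix (Fin s × Fin m) (Fin s × Fin m) ℝ) - h • Mblk h K11 c A F1).det =
      (NormedSpace.exp (h • K11)).det *
        ((1 : Matrix (Fin s × Fin m) (Fin s × Fin m) ℝ) + h • Mblk h K11 c Aᵀ F1).det)
    (P : Matrix (Fin n) (Fin n) ℝ) (hP : IsUnit P)
    (hK22 : P * K22 * P⁻¹ = -K22ᵀ)
    (hF2 : ∀ i, P * F2 i * P⁻¹ = -(F2 i)ᵀ) :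
    ((1 : Matrix (Fin s × (Fin m ⊕ Fin n)) (Fin s × (Fin m ⊕ Fin n)) ℝ) -
        h • Mblk h K c A F).det =
      (NormedSpace.exp (h • K)).det *
        ((1 : Matrix (Fin s × (Fin m ⊕ Fin n)) (Fin s × (Fin m ⊕ Fin n)) ℝ) +
          h • Mblk h K c Aᵀ F).det := by
  obtain rfl := hK
  obtain rfl : F = fun i => fromBlocks (F1 i) 0 (G i) (F2 i) := funext hF
  have hexp : (exp (h • fromBlocks K11 0 0 K22)).det = (exp (h • K11)).det := by
    rw [fromBlocks_smul, smul_zero, smul_zero, exp_fromBlocks_zero, det_fromBlocks_zero₁₂,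
      det_exp_eq_one_of_conj_eq_neg_transpose hP (conj_smul_eq_neg_transpose hK22 h), mul_one]
  have hsplit := det_one_add_smul_Mblk_fromBlocks h (-h) c K11 K22 F1 F2 G A
  simp only [neg_smul, ← sub_eq_add_neg] at hsplit
  rw [hsplit, hVP1, det_one_sub_smul_Mblk h c A hP hK22 hF2, det_one_add_smul_Mblk_fromBlocks,
    hexp, mul_assoc]
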